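/- arXiv:2509.15554 — 5 statements merged into one kernel-verified Lean document; each statement's English description precedes it below -/
import Mathlib

section
/- For every z in the open upper half-plane (Im z > 0) there exists exactly one complex number b with Im b > 0 satisfying the Marcenko–Pastur-type equation b = (1/N) * Σ_{i=1}^{L} N_i / (λ_i (1 − c − c z b) − z). -/
open Finset Complex Function Filter Topology

/-!
Write `G b = (1/N) ∑ Nᵢ / Dᵢ(b)` with `Dᵢ(b) = λᵢ (1 - c - c z b) - z`, `v = Im z`,
`B(b) = (1/N) ∑ Nᵢ λᵢ / |Dᵢ(b)|²` and `r(b) = Im b · Im (z b)`. On the set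
`S = {Im b ≥ 0, Im (z b) ≥ 0, ‖b‖ ≤ 1/v}` every `Im Dᵢ(b) ≤ -v`, so `G` is defined there and maps
`S` into itself, with `Im (z G b) = ((1 - c) v + c |z|² Im b) B(b)`. Two estimates drive the proof:
Cauchy–Schwarz gives `‖G b - G b'‖² ≤ c² |z|² B(b) B(b') ‖b - b'‖²`, and `r` grows,
`r(G b) ≥ θ B(b)² r(b)` with `θ = c² |z|² + c (1 - c) v²`, which is strictly larger than `c² |z|²`.
At a fixed point the growth bound forces `θ B² ≤ 1`, so two fixed points are joined by a strict
contraction and coincide. Along the orbit `bₙ` of `0`, combining the two estimates makes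
`‖bₙ - bₙ₊₁‖⁴ / (rₙ rₙ₊₁)` decay like `(c² |z|² / θ)²ⁿ`; since `r` is bounded on `S` the orbit
converges, and its limit is a fixed point with `Im b > 0`.
-/

theorem mul_le_pow_mul_of_le_mul_mul {e a r : ℕ → ℝ} {σ : ℝ} (hσ : 0 ≤ σ) (he0 : 0 ≤ e 0)
    (ha : ∀ n, 0 ≤ a n) (hr : ∀ n, 0 ≤ r n) (he : ∀ n, e (n + 1) ≤ σ * (a n * a (n + 1)) * e n)
    (har : ∀ n, a n * r n ≤ r (n + 1)) (n : ℕ) :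
    e n * (r 0 * r 1) ≤ σ ^ n * e 0 * (r n * r (n + 1)) := by
  induction n with
  | zero => simp
  | succ n ih =>
    have hr01 := mul_nonneg (hr 0) (hr 1)
    have han := mul_nonneg (ha n) (ha (n + 1))
    calc e (n + 1) * (r 0 * r 1) ≤ σ * (a n * a (n + 1)) * e n * (r 0 * r 1) :=
          mul_le_mul_of_nonneg_right (he n) hr01
      _ ≤ σ * (a n * a (n + 1)) * (σ ^ n * e 0 * (r n * r (n + 1))) := by
          rw [mul_assoc _ (e n)]
          exact mul_le_mul_of_nonneg_left ih (mul_nonneg hσ han)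
      _ = σ ^ (n + 1) * e 0 * ((a n * r n) * (a (n + 1) * r (n + 1))) := by ring
      _ ≤ σ ^ (n + 1) * e 0 * (r (n + 1) * r (n + 1 + 1)) := by
          gcongr
          exacts [mul_nonneg (ha (n + 1)) (hr (n + 1)), hr (n + 1), har n, har (n + 1)]

theorem cauchySeq_of_dist_pow_le_geometric {X : Type*} [PseudoMetricSpace X] {x : ℕ → X} {m : ℕ}
    (hm : m ≠ 0) {C σ : ℝ} (hσ0 : 0 ≤ σ) (hσ1 : σ < 1)
    (h : ∀ n, dist (x n) (x (n + 1)) ^ m ≤ C * σ ^ n) : CauchySeq x := by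
  have hC : 0 ≤ C := by simpa using (pow_nonneg dist_nonneg m).trans (h 0)
  refine cauchySeq_of_le_geometric (σ ^ (m⁻¹ : ℝ)) (C ^ (m⁻¹ : ℝ))
    (Real.rpow_lt_one hσ0 hσ1 (by positivity)) fun n => ?_
  calc dist (x n) (x (n + 1)) = (dist (x n) (x (n + 1)) ^ m) ^ (m⁻¹ : ℝ) :=
        (Real.pow_rpow_inv_natCast dist_nonneg hm).symm
    _ ≤ (C * σ ^ n) ^ (m⁻¹ : ℝ) := Real.rpow_le_rpow (by positivity) (h n) (by positivity)
    _ = C ^ (m⁻¹ : ℝ) * (σ ^ (m⁻¹ : ℝ)) ^ n := by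
        rw [Real.mul_rpow hC (by positivity), Real.rpow_pow_comm hσ0]

namespace MarcenkoPastur

variable {L : ℕ} (N : ℕ) (lam : Fin L → ℝ) (Ni : Fin L → ℕ) (c : ℝ) (z : ℂ)

noncomputable def denom (b : ℂ) (i : Fin L) : ℂ :=
  (lam i : ℂ) * (1 - (c : ℂ) - (c : ℂ) * z * b) - z

noncomputable def fixMap (b : ℂ) : ℂ :=
  (1 / (N : ℂ)) * ∑ i, (Ni i : ℂ) / denom lam c z b i

noncomputable def lamMoment (b : ℂ) : ℝ :=
  (1 / (N : ℝ)) * ∑ i, (Ni i : ℝ) * lam i / normSq (denom lam c z b i)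

noncomputable def moment (b : ℂ) : ℝ :=
  (1 / (N : ℝ)) * ∑ i, (Ni i : ℝ) / normSq (denom lam c z b i)

def trapSet : Set ℂ := {b | 0 ≤ b.im ∧ 0 ≤ (z * b).im ∧ ‖b‖ ≤ 1 / z.im}

def gain : ℝ := c ^ 2 * normSq z + c * (1 - c) * z.im ^ 2

variable {N lam Ni c z}

lemma sq_mul_normSq_lt_gain (hc0 : 0 < c) (hc1 : c < 1) (hz : 0 < z.im) :
    c ^ 2 * normSq z < gain c z := by
  have : 0 < c * (1 - c) * z.im ^ 2 := by have := sub_pos.2 hc1; positivity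
  unfold gain
  linarith

lemma gain_pos (hc0 : 0 < c) (hc1 : c < 1) (hz : 0 < z.im) : 0 < gain c z :=
  (mul_nonneg (sq_nonneg c) (normSq_nonneg z)).trans_lt (sq_mul_normSq_lt_gain hc0 hc1 hz)

lemma denom_im (b : ℂ) (i : Fin L) :
    (denom lam c z b i).im = -(lam i * c * (z * b).im + z.im) := by
  simp only [denom, sub_im, mul_im, ofReal_re, ofReal_im, sub_re, one_re, one_im, mul_re]
  ring

lemma denom_re (b : ℂ) (i : Fin L) :
    (denom lam c z b i).re = lam i * (1 - c - c * (z * b).re) - z.re := by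
  simp only [denom, sub_re, mul_re, ofReal_re, ofReal_im, sub_im, one_re, one_im, mul_im]
  ring

lemma im_le_norm_denom (hlam : ∀ i, 0 < lam i) (hc : 0 ≤ c) {b : ℂ} (hb : 0 ≤ (z * b).im)
    (i : Fin L) : z.im ≤ ‖denom lam c z b i‖ := by
  have : 0 ≤ lam i * c * (z * b).im := by have := hlam i; positivity
  calc z.im ≤ -(denom lam c z b i).im := by rw [denom_im]; linarith
    _ ≤ ‖denom lam c z b i‖ := (neg_le_abs _).trans (abs_im_le_norm _)

lemma denom_ne_zero (hlam : ∀ i, 0 < lam i) (hc : 0 ≤ c) (hz : 0 < z.im) {b : ℂ}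
    (hb : 0 ≤ (z * b).im) (i : Fin L) : denom lam c z b i ≠ 0 :=
  norm_pos_iff.mp (hz.trans_le (im_le_norm_denom hlam hc hb i))

lemma fixMap_im (b : ℂ) :
    (fixMap N lam Ni c z b).im = c * (z * b).im * lamMoment N lam Ni c z b
      + z.im * moment N lam Ni c z b := by
  have hN : (1 / (N : ℂ)) = ((1 / (N : ℝ) : ℝ) : ℂ) := by push_cast; ring
  rw [fixMap, hN, im_ofReal_mul, im_sum, lamMoment, moment, mul_sum, mul_sum, mul_sum, mul_sum,
    mul_sum, ← sum_add_distrib]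
  refine sum_congr rfl fun i _ => ?_
  rw [div_im, denom_im]
  simp only [natCast_re, natCast_im]
  ring

lemma im_mul_fixMap (b : ℂ) :
    (z * fixMap N lam Ni c z b).im
      = ((1 - c) * z.im + c * normSq z * b.im) * lamMoment N lam Ni c z b := by
  have hsum : z * fixMap N lam Ni c z b
      = ∑ i, ((1 / (N : ℝ) : ℝ) : ℂ) * (z * ((Ni i : ℂ) / denom lam c z b i)) := by
    rw [fixMap, mul_sum, mul_sum]
    exact sum_congr rfl fun i _ => by push_cast; ring
  rw [hsum, im_sum, lamMoment, mul_sum, mul_sum]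
  refine sum_congr rfl fun i _ => ?_
  rw [im_ofReal_mul, mul_div_assoc, mul_im, div_im, div_re, denom_im, denom_re]
  simp only [natCast_re, natCast_im, normSq_apply, mul_re, mul_im]
  ring

lemma lamMoment_nonneg (hlam : ∀ i, 0 < lam i) (b : ℂ) : 0 ≤ lamMoment N lam Ni c z b :=
  mul_nonneg (by positivity) (sum_nonneg fun i _ =>
    div_nonneg (mul_nonneg (Nat.cast_nonneg _) (hlam i).le) (normSq_nonneg _))

lemma moment_nonneg (b : ℂ) : 0 ≤ moment N lam Ni c z b :=
  mul_nonneg (by positivity) (sum_nonneg fun i _ =>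
    div_nonneg (Nat.cast_nonneg _) (normSq_nonneg _))

lemma lamMoment_pos (hL : 0 < L) (hN : 0 < N) (hNi : ∀ i, 0 < Ni i) (hlam : ∀ i, 0 < lam i)
    {b : ℂ} (hD : ∀ i, denom lam c z b i ≠ 0) : 0 < lamMoment N lam Ni c z b := by
  have : Nonempty (Fin L) := ⟨⟨0, hL⟩⟩
  refine mul_pos (by positivity) (sum_pos (fun i _ => ?_) univ_nonempty)
  have := normSq_pos.2 (hD i)
  have := hlam i
  have : 0 < Ni i := hNi i
  positivity

lemma moment_pos (hL : 0 < L) (hN : 0 < N) (hNi : ∀ i, 0 < Ni i)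
    {b : ℂ} (hD : ∀ i, denom lam c z b i ≠ 0) : 0 < moment N lam Ni c z b := by
  have : Nonempty (Fin L) := ⟨⟨0, hL⟩⟩
  refine mul_pos (by positivity) (sum_pos (fun i _ => ?_) univ_nonempty)
  have := normSq_pos.2 (hD i)
  have : 0 < Ni i := hNi i
  positivity

lemma norm_fixMap_le (hN : 0 < N) (hsum : ∑ i, Ni i = N) (hlam : ∀ i, 0 < lam i) (hc : 0 ≤ c)
    (hz : 0 < z.im) {b : ℂ} (hb : 0 ≤ (z * b).im) : ‖fixMap N lam Ni c z b‖ ≤ 1 / z.im := by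
  have hsumR : ∑ i, (Ni i : ℝ) = N := by exact_mod_cast hsum
  calc ‖fixMap N lam Ni c z b‖ ≤ 1 / (N : ℝ) * ∑ i, (Ni i : ℝ) / z.im := by
        rw [fixMap, norm_mul, norm_div, norm_one, norm_natCast]
        gcongr
        refine (norm_sum_le _ _).trans (sum_le_sum fun i _ => ?_)
        rw [norm_div, norm_natCast]
        gcongr
        exact im_le_norm_denom hlam hc hb i
    _ = 1 / z.im := by
        rw [← sum_div, hsumR]
        field_simp

lemma im_fixMap_pos (hL : 0 < L) (hN : 0 < N) (hNi : ∀ i, 0 < Ni i) (hlam : ∀ i, 0 < lam i)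
    (hc : 0 < c) (hz : 0 < z.im) {b : ℂ} (hb : b ∈ trapSet z) :
    0 < (fixMap N lam Ni c z b).im := by
  have hB : 0 ≤ lamMoment N lam Ni c z b := lamMoment_nonneg hlam b
  have hQ := moment_pos hL hN hNi (denom_ne_zero (lam := lam) hlam hc.le hz hb.2.1)
  have := hb.2.1
  rw [fixMap_im]
  positivity

lemma im_mul_fixMap_pos (hL : 0 < L) (hN : 0 < N) (hNi : ∀ i, 0 < Ni i) (hlam : ∀ i, 0 < lam i)
    (hc0 : 0 < c) (hc1 : c < 1) (hz : 0 < z.im) {b : ℂ} (hb : b ∈ trapSet z) :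
    0 < (z * fixMap N lam Ni c z b).im := by
  have hB := lamMoment_pos hL hN hNi hlam (denom_ne_zero (lam := lam) hlam hc0.le hz hb.2.1)
  have : 0 ≤ c * normSq z * b.im := mul_nonneg (mul_nonneg hc0.le (normSq_nonneg z)) hb.1
  rw [im_mul_fixMap]
  exact mul_pos (by nlinarith) hB

lemma fixMap_mem_trapSet (hL : 0 < L) (hN : 0 < N) (hNi : ∀ i, 0 < Ni i)
    (hsum : ∑ i, Ni i = N) (hlam : ∀ i, 0 < lam i) (hc0 : 0 < c) (hc1 : c < 1) (hz : 0 < z.im)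
    {b : ℂ} (hb : b ∈ trapSet z) : fixMap N lam Ni c z b ∈ trapSet z :=
  ⟨(im_fixMap_pos hL hN hNi hlam hc0 hz hb).le, (im_mul_fixMap_pos hL hN hNi hlam hc0 hc1 hz hb).le,
    norm_fixMap_le hN hsum hlam hc0.le hz hb.2.1⟩

lemma im_mul_im_le {b : ℂ} (hb : b ∈ trapSet z) : b.im * (z * b).im ≤ ‖z‖ / z.im ^ 2 := by
  have hβ : b.im ≤ 1 / z.im := (im_le_norm b).trans hb.2.2
  have hy : (z * b).im ≤ ‖z‖ * (1 / z.im) :=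
    (im_le_norm _).trans (norm_mul z b ▸ mul_le_mul_of_nonneg_left hb.2.2 (norm_nonneg z))
  calc b.im * (z * b).im ≤ 1 / z.im * (‖z‖ * (1 / z.im)) :=
        mul_le_mul hβ hy hb.2.1 (hb.1.trans hβ)
    _ = ‖z‖ / z.im ^ 2 := by ring

/-- With `β = b.im`, `y = (z * b).im`, `v = z.im`, `B = lamMoment b` and `Q = moment b`, the right
side minus the left is `c (1 - c) v y B² (1 - v β) + v Q ((1 - c) v + c |z|² β) B`, nonnegative
because `β ≤ ‖b‖ ≤ 1 / v`. -/
lemma gain_mul_le (hc0 : 0 ≤ c) (hc1 : c ≤ 1) (hz : 0 < z.im) (hlam : ∀ i, 0 < lam i)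
    {b : ℂ} (hb : b ∈ trapSet z) :
    gain c z * lamMoment N lam Ni c z b ^ 2 * (b.im * (z * b).im)
      ≤ (fixMap N lam Ni c z b).im * (z * fixMap N lam Ni c z b).im := by
  obtain ⟨hβ, hy, hnorm⟩ := hb
  have hB : 0 ≤ lamMoment N lam Ni c z b := lamMoment_nonneg hlam b
  have hQ : 0 ≤ moment N lam Ni c z b := moment_nonneg b
  have hβv : z.im * b.im ≤ 1 := by
    have := (im_le_norm b).trans hnorm
    rwa [le_div_iff₀ hz, mul_comm] at this
  have h1 : 0 ≤ c * (1 - c) * z.im * lamMoment N lam Ni c z b ^ 2 * (z * b).im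
      * (1 - z.im * b.im) := by
    have : 0 ≤ 1 - c := sub_nonneg.2 hc1
    have : 0 ≤ 1 - z.im * b.im := sub_nonneg.2 hβv
    positivity
  have h2 : 0 ≤ z.im * moment N lam Ni c z b
      * (((1 - c) * z.im + c * normSq z * b.im) * lamMoment N lam Ni c z b) := by
    have : 0 ≤ 1 - c := sub_nonneg.2 hc1
    have := normSq_nonneg z
    positivity
  rw [fixMap_im, im_mul_fixMap, gain]
  nlinarith [h1, h2]

lemma fixMap_sub (hlam : ∀ i, 0 < lam i) (hc : 0 ≤ c) (hz : 0 < z.im) {b b' : ℂ}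
    (hb : 0 ≤ (z * b).im) (hb' : 0 ≤ (z * b').im) :
    fixMap N lam Ni c z b - fixMap N lam Ni c z b'
      = (1 / (N : ℂ)) * ∑ i, (Ni i : ℂ) * lam i * (c * z * (b - b'))
          / (denom lam c z b i * denom lam c z b' i) := by
  rw [fixMap, fixMap, ← mul_sub, ← sum_sub_distrib]
  congr 1
  refine sum_congr rfl fun i _ => ?_
  rw [div_sub_div _ _ (denom_ne_zero hlam hc hz hb i) (denom_ne_zero hlam hc hz hb' i)]
  congr 1
  simp only [denom]
  ring

lemma norm_fixMap_sub_le (hlam : ∀ i, 0 < lam i) (hc : 0 ≤ c) (hz : 0 < z.im) {b b' : ℂ}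
    (hb : 0 ≤ (z * b).im) (hb' : 0 ≤ (z * b').im) :
    ‖fixMap N lam Ni c z b - fixMap N lam Ni c z b'‖
      ≤ c * ‖z‖ * ‖b - b'‖ * ((1 / (N : ℝ)) * ∑ i, (Ni i : ℝ) * lam i
          / (‖denom lam c z b i‖ * ‖denom lam c z b' i‖)) := by
  rw [fixMap_sub hlam hc hz hb hb', norm_mul, norm_div, norm_one, norm_natCast,
    mul_left_comm (c * ‖z‖ * ‖b - b'‖), mul_sum]
  gcongr
  refine (norm_sum_le _ _).trans (sum_le_sum fun i _ => le_of_eq ?_)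
  rw [norm_div, norm_mul, norm_mul, norm_mul, norm_mul, norm_mul, norm_natCast, norm_real,
    norm_real, Real.norm_of_nonneg (hlam i).le, Real.norm_of_nonneg hc]
  ring

lemma sq_norm_fixMap_sub_le (hlam : ∀ i, 0 < lam i) (hc : 0 ≤ c) (hz : 0 < z.im) {b b' : ℂ}
    (hb : 0 ≤ (z * b).im) (hb' : 0 ≤ (z * b').im) :
    ‖fixMap N lam Ni c z b - fixMap N lam Ni c z b'‖ ^ 2
      ≤ c ^ 2 * normSq z * (lamMoment N lam Ni c z b * lamMoment N lam Ni c z b')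
        * ‖b - b'‖ ^ 2 := by
  set S := (1 / (N : ℝ)) * ∑ i, (Ni i : ℝ) * lam i
    / (‖denom lam c z b i‖ * ‖denom lam c z b' i‖)
  have hCS : S ^ 2 ≤ lamMoment N lam Ni c z b * lamMoment N lam Ni c z b' := by
    rw [lamMoment, lamMoment, mul_pow, mul_mul_mul_comm, ← sq]
    gcongr
    refine sum_sq_le_sum_mul_sum_of_sq_le_mul _
      (fun i _ => div_nonneg (mul_nonneg (Nat.cast_nonneg _) (hlam i).le) (normSq_nonneg _))
      (fun i _ => div_nonneg (mul_nonneg (Nat.cast_nonneg _) (hlam i).le) (normSq_nonneg _))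
      fun i _ => le_of_eq ?_
    rw [← Complex.sq_norm, ← Complex.sq_norm]
    ring
  have hS : 0 ≤ S := mul_nonneg (by positivity) (sum_nonneg fun i _ =>
    div_nonneg (mul_nonneg (Nat.cast_nonneg _) (hlam i).le) (by positivity))
  calc ‖fixMap N lam Ni c z b - fixMap N lam Ni c z b'‖ ^ 2
      ≤ (c * ‖z‖ * ‖b - b'‖ * S) ^ 2 := by
        gcongr
        exact norm_fixMap_sub_le hlam hc hz hb hb'
    _ = c ^ 2 * ‖z‖ ^ 2 * S ^ 2 * ‖b - b'‖ ^ 2 := by ring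
    _ ≤ _ := by
        rw [Complex.sq_norm]
        have := normSq_nonneg z
        gcongr

lemma pow_four_norm_fixMap_sub_le (hlam : ∀ i, 0 < lam i) (hc0 : 0 < c) (hc1 : c < 1)
    (hz : 0 < z.im) {b b' : ℂ} (hb : 0 ≤ (z * b).im) (hb' : 0 ≤ (z * b').im) :
    ‖fixMap N lam Ni c z b - fixMap N lam Ni c z b'‖ ^ 4
      ≤ (c ^ 2 * normSq z / gain c z) ^ 2
        * (gain c z * lamMoment N lam Ni c z b ^ 2 * (gain c z * lamMoment N lam Ni c z b' ^ 2))
        * ‖b - b'‖ ^ 4 := by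
  have hgain := gain_pos hc0 hc1 hz
  calc ‖fixMap N lam Ni c z b - fixMap N lam Ni c z b'‖ ^ 4
      = (‖fixMap N lam Ni c z b - fixMap N lam Ni c z b'‖ ^ 2) ^ 2 := by ring
    _ ≤ (c ^ 2 * normSq z * (lamMoment N lam Ni c z b * lamMoment N lam Ni c z b')
          * ‖b - b'‖ ^ 2) ^ 2 :=
        pow_le_pow_left₀ (sq_nonneg _) (sq_norm_fixMap_sub_le hlam hc0.le hz hb hb') 2
    _ = _ := by field_simp

lemma continuousAt_fixMap {b : ℂ} (hD : ∀ i, denom lam c z b i ≠ 0) :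
    ContinuousAt (fixMap N lam Ni c z) b := by
  unfold fixMap denom at *
  exact continuousAt_const.mul (tendsto_finsetSum _ fun i _ =>
    continuousAt_const.div (by fun_prop) (hD i))

lemma isClosed_trapSet : IsClosed (trapSet z) :=
  (isClosed_le continuous_const continuous_im).inter <|
    (isClosed_le continuous_const (continuous_im.comp (continuous_const_mul z))).inter
      (isClosed_le continuous_norm continuous_const)

lemma zero_mem_trapSet (hz : 0 < z.im) : (0 : ℂ) ∈ trapSet z := by
  refine ⟨le_rfl, by simp, ?_⟩
  rw [norm_zero]
  positivity

lemma mem_trapSet_of_isFixedPt (hN : 0 < N) (hsum : ∑ i, Ni i = N) (hlam : ∀ i, 0 < lam i)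
    (hc0 : 0 < c) (hc1 : c < 1) (hz : 0 < z.im) {b : ℂ} (hb : 0 < b.im)
    (hfix : IsFixedPt (fixMap N lam Ni c z) b) : b ∈ trapSet z := by
  have hy : 0 ≤ (z * b).im := by
    rw [← hfix, im_mul_fixMap]
    refine mul_nonneg ?_ (lamMoment_nonneg hlam b)
    have : 0 ≤ c * normSq z * b.im := mul_nonneg (mul_nonneg hc0.le (normSq_nonneg z)) hb.le
    nlinarith
  exact ⟨hb.le, hy, hfix ▸ norm_fixMap_le hN hsum hlam hc0.le hz hy⟩

lemma gain_mul_sq_le_one_of_isFixedPt (hL : 0 < L) (hN : 0 < N) (hNi : ∀ i, 0 < Ni i)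
    (hsum : ∑ i, Ni i = N) (hlam : ∀ i, 0 < lam i) (hc0 : 0 < c) (hc1 : c < 1) (hz : 0 < z.im)
    {b : ℂ} (hb : 0 < b.im) (hfix : IsFixedPt (fixMap N lam Ni c z) b) :
    gain c z * lamMoment N lam Ni c z b ^ 2 ≤ 1 := by
  have hS := mem_trapSet_of_isFixedPt hN hsum hlam hc0 hc1 hz hb hfix
  have hr : 0 < b.im * (z * b).im := by
    refine mul_pos hb ?_
    rw [← hfix]
    exact im_mul_fixMap_pos hL hN hNi hlam hc0 hc1 hz hS
  have hgrowth := gain_mul_le (Ni := Ni) (N := N) hc0.le hc1.le hz hlam hS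
  rw [hfix] at hgrowth
  exact le_of_mul_le_mul_right (by linarith) hr

lemma eq_of_isFixedPt (hL : 0 < L) (hN : 0 < N) (hNi : ∀ i, 0 < Ni i)
    (hsum : ∑ i, Ni i = N) (hlam : ∀ i, 0 < lam i) (hc0 : 0 < c) (hc1 : c < 1) (hz : 0 < z.im)
    {b b' : ℂ} (hb : 0 < b.im) (hfix : IsFixedPt (fixMap N lam Ni c z) b)
    (hb' : 0 < b'.im) (hfix' : IsFixedPt (fixMap N lam Ni c z) b') : b = b' := by
  have hS := mem_trapSet_of_isFixedPt hN hsum hlam hc0 hc1 hz hb hfix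
  have hS' := mem_trapSet_of_isFixedPt hN hsum hlam hc0 hc1 hz hb' hfix'
  set B := lamMoment N lam Ni c z b
  set B' := lamMoment N lam Ni c z b'
  have hB : 0 < B := lamMoment_pos hL hN hNi hlam (denom_ne_zero hlam hc0.le hz hS.2.1)
  have hB' : 0 < B' := lamMoment_pos hL hN hNi hlam (denom_ne_zero hlam hc0.le hz hS'.2.1)
  have hgain : gain c z * (B * B') ≤ 1 := by
    have := gain_pos hc0 hc1 hz
    have h := mul_le_one₀ (gain_mul_sq_le_one_of_isFixedPt hL hN hNi hsum hlam hc0 hc1 hz hb hfix)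
      (by positivity) (gain_mul_sq_le_one_of_isFixedPt hL hN hNi hsum hlam hc0 hc1 hz hb' hfix')
    have : (gain c z * (B * B')) ^ 2 ≤ 1 := by linarith
    exact (sq_le_one_iff₀ (by positivity)).1 this
  have hlip : c ^ 2 * normSq z * (B * B') < 1 :=
    (mul_lt_mul_of_pos_right (sq_mul_normSq_lt_gain hc0 hc1 hz) (mul_pos hB hB')).trans_le hgain
  have h := sq_norm_fixMap_sub_le (Ni := Ni) (N := N) hlam hc0.le hz hS.2.1 hS'.2.1
  rw [hfix, hfix'] at h
  have hzero : ‖b - b'‖ ^ 2 = 0 := le_antisymm (by nlinarith [sq_nonneg ‖b - b'‖]) (sq_nonneg _)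
  simpa [sub_eq_zero] using hzero

lemma iterate_fixMap_mem_trapSet (hL : 0 < L) (hN : 0 < N) (hNi : ∀ i, 0 < Ni i)
    (hsum : ∑ i, Ni i = N) (hlam : ∀ i, 0 < lam i) (hc0 : 0 < c) (hc1 : c < 1) (hz : 0 < z.im)
    (n : ℕ) : (fixMap N lam Ni c z)^[n] 0 ∈ trapSet z := by
  induction n with
  | zero => exact zero_mem_trapSet hz
  | succ n ih =>
    rw [iterate_succ_apply']
    exact fixMap_mem_trapSet hL hN hNi hsum hlam hc0 hc1 hz ih

lemma cauchySeq_iterate_fixMap (hL : 0 < L) (hN : 0 < N) (hNi : ∀ i, 0 < Ni i)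
    (hsum : ∑ i, Ni i = N) (hlam : ∀ i, 0 < lam i) (hc0 : 0 < c) (hc1 : c < 1) (hz : 0 < z.im) :
    CauchySeq fun n => (fixMap N lam Ni c z)^[n + 1] 0 := by
  have hS := iterate_fixMap_mem_trapSet hL hN hNi hsum hlam hc0 hc1 hz
  set x : ℕ → ℂ := fun n => (fixMap N lam Ni c z)^[n + 1] 0
  have hx : ∀ n, x n = fixMap N lam Ni c z ((fixMap N lam Ni c z)^[n] 0) := fun n =>
    iterate_succ_apply' _ n 0
  have hx_succ : ∀ n, x (n + 1) = fixMap N lam Ni c z (x n) := fun n => hx (n + 1)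
  have hxS : ∀ n, x n ∈ trapSet z := fun n => hS (n + 1)
  set r : ℕ → ℝ := fun n => (x n).im * (z * x n).im
  set a : ℕ → ℝ := fun n => gain c z * lamMoment N lam Ni c z (x n) ^ 2
  set d : ℕ → ℝ := fun n => dist (x n) (x (n + 1))
  set ρ := c ^ 2 * normSq z / gain c z
  have hgain := gain_pos hc0 hc1 hz
  have hr : ∀ n, 0 < r n := fun n => by
    simp only [r, hx]
    exact mul_pos (im_fixMap_pos hL hN hNi hlam hc0 hz (hS n))
      (im_mul_fixMap_pos hL hN hNi hlam hc0 hc1 hz (hS n))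
  have ha : ∀ n, 0 ≤ a n := fun n => mul_nonneg hgain.le (sq_nonneg _)
  have har : ∀ n, a n * r n ≤ r (n + 1) := fun n => by
    simp only [a, r, hx_succ n]
    exact gain_mul_le hc0.le hc1.le hz hlam (hxS n)
  have hd : ∀ n, d (n + 1) ^ 4 ≤ ρ ^ 2 * (a n * a (n + 1)) * d n ^ 4 := fun n => by
    have h := pow_four_norm_fixMap_sub_le (N := N) (Ni := Ni) hlam hc0 hc1 hz (hxS n).2.1
      (hxS (n + 1)).2.1
    rwa [← hx_succ, ← hx_succ, ← dist_eq_norm, ← dist_eq_norm] at h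
  have hR : ∀ n, r n ≤ ‖z‖ / z.im ^ 2 := fun n => im_mul_im_le (hxS n)
  have hρ0 : 0 ≤ ρ := div_nonneg (mul_nonneg (sq_nonneg c) (normSq_nonneg z)) hgain.le
  have hρ1 : ρ < 1 := (div_lt_one hgain).2 (sq_mul_normSq_lt_gain hc0 hc1 hz)
  refine cauchySeq_of_dist_pow_le_geometric (m := 4) (by norm_num)
    (C := d 0 ^ 4 * (‖z‖ / z.im ^ 2) ^ 2 / (r 0 * r 1)) (sq_nonneg ρ)
    (pow_lt_one₀ hρ0 hρ1 two_ne_zero) fun n => ?_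
  have h := mul_le_pow_mul_of_le_mul_mul (e := fun n => d n ^ 4) (sq_nonneg ρ)
    (pow_nonneg dist_nonneg 4) ha (fun n => (hr n).le) hd har n
  rw [div_mul_eq_mul_div, le_div_iff₀ (mul_pos (hr 0) (hr 1))]
  calc d n ^ 4 * (r 0 * r 1) ≤ (ρ ^ 2) ^ n * d 0 ^ 4 * (r n * r (n + 1)) := h
    _ ≤ (ρ ^ 2) ^ n * d 0 ^ 4 * ((‖z‖ / z.im ^ 2) * (‖z‖ / z.im ^ 2)) := by
        gcongr
        exacts [(hr (n + 1)).le, hR n, hR (n + 1)]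
    _ = _ := by ring

lemma exists_isFixedPt (hL : 0 < L) (hN : 0 < N) (hNi : ∀ i, 0 < Ni i)
    (hsum : ∑ i, Ni i = N) (hlam : ∀ i, 0 < lam i) (hc0 : 0 < c) (hc1 : c < 1) (hz : 0 < z.im) :
    ∃ b : ℂ, 0 < b.im ∧ IsFixedPt (fixMap N lam Ni c z) b := by
  obtain ⟨b, hlim⟩ := cauchySeq_tendsto_of_complete
    (cauchySeq_iterate_fixMap hL hN hNi hsum hlam hc0 hc1 hz)
  have hbS : b ∈ trapSet z := isClosed_trapSet.mem_of_tendsto hlim <|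
    Eventually.of_forall fun n => iterate_fixMap_mem_trapSet hL hN hNi hsum hlam hc0 hc1 hz (n + 1)
  have hfix : IsFixedPt (fixMap N lam Ni c z) b := by
    have hcont := (continuousAt_fixMap (N := N) (Ni := Ni)
      (denom_ne_zero hlam hc0.le hz hbS.2.1)).tendsto.comp hlim
    have hshift := (tendsto_add_atTop_iff_nat 1).2 hlim
    simp only [iterate_succ_apply' _ (_ + 1)] at hshift
    exact tendsto_nhds_unique hcont hshift
  exact ⟨b, hfix ▸ im_fixMap_pos hL hN hNi hlam hc0 hz hbS, hfix⟩

end MarcenkoPastur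

theorem mp_equation_unique_solution_general
    (L N : ℕ) (hL : 0 < L) (hN : 0 < N)
    (lam : Fin L → ℝ) (hlam_pos : ∀ i, 0 < lam i)
    (Ni : Fin L → ℕ) (hNi : ∀ i, 0 < Ni i) (hsum : ∑ i, Ni i = N)
    (c : ℝ) (hc0 : 0 < c) (hc1 : c < 1)
    (z : ℂ) (hz : 0 < z.im) :
    ∃! b : ℂ, 0 < b.im ∧
      b = (1 / (N : ℂ)) *
        ∑ i, (Ni i : ℂ) / ((lam i : ℂ) * (1 - (c : ℂ) - (c : ℂ) * z * b) - z) := by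
  obtain ⟨b, hb, hfix⟩ := MarcenkoPastur.exists_isFixedPt hL hN hNi hsum hlam_pos hc0 hc1 hz
  exact ⟨b, ⟨hb, hfix.symm⟩, fun b' ⟨hb', hfix'⟩ =>
    MarcenkoPastur.eq_of_isFixedPt hL hN hNi hsum hlam_pos hc0 hc1 hz hb' hfix'.symm hb hfix⟩

/-- Theorem 1 (eq. (9)) of the paper: for every `z` in the open upper half-plane there is
exactly one `b` with positive imaginary part satisfying the Marcenko–Pastur-type equation
`b = (1/N) * Σ_{i=1}^{L} N_i / (λ_i (1 − c − c z b) − z)`. -/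
theorem mp_equation_unique_solution
    (L N : ℕ) (hL : 0 < L) (hN : 0 < N)
    (lam : Fin L → ℝ) (hlam_pos : ∀ i, 0 < lam i) (hlam_mono : StrictMono lam)
    (Ni : Fin L → ℕ) (hNi : ∀ i, 0 < Ni i) (hsum : ∑ i, Ni i = N)
    (c : ℝ) (hc0 : 0 < c) (hc1 : c < 1)
    (z : ℂ) (hz : 0 < z.im) :
    ∃! b : ℂ, 0 < b.im ∧
      b = (1 / (N : ℂ)) *
        ∑ i, (Ni i : ℂ) / ((lam i : ℂ) * (1 - (c : ℂ) - (c : ℂ) * z * b) - z) :=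
  mp_equation_unique_solution_general L N hL hN lam hlam_pos Ni hNi hsum c hc0 hc1 z hz
end

section
/- Let Y be an N×K complex matrix such that Y Yᴴ is invertible, set M̂ = (Y Yᴴ)⁻¹ and c_K = N/K. Then for every z ∈ ℂ with Im z ≠ 0, the matrices Yᴴ Y − (1/z) I_K and M̂ − z I_N are invertible and (1/K) tr((Yᴴ Y − (1/z) I_K)⁻¹) = −z (1 + c_K z · (1/N) tr((M̂ − z I_N)⁻¹)). -/
/-!
Put `A = Y Yᴴ` and `ζ = 1/z`. Since `A` is Hermitian its spectrum is real, so `A - ζ` is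
invertible. The push-through identity `(Yᴴ Y - ζ)⁻¹ = ζ⁻¹ (Yᴴ (A - ζ)⁻¹ Y - 1)` and the
factorisation `A⁻¹ - z = -z A⁻¹ (A - ζ)` then express both traces through `tr (A - ζ)⁻¹`,
using `A (A - ζ)⁻¹ = 1 + ζ (A - ζ)⁻¹`.
-/

open Matrix

namespace Matrix

theorem IsHermitian.isUnit_sub_smul_one {n : Type*} [Fintype n] [DecidableEq n]
    {B : Matrix n n ℂ} (hB : B.IsHermitian) {w : ℂ} (hw : w.im ≠ 0) :
    IsUnit (B - w • (1 : Matrix n n ℂ)) := by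
  have hw : w ∉ spectrum ℂ B := by
    rw [hB.spectrum_eq_image_range]
    rintro ⟨r, -, rfl⟩
    exact hw (Complex.ofReal_im r)
  rw [spectrum.notMem_iff, Algebra.algebraMap_eq_smul_one] at hw
  simpa using hw.neg

section Resolvent

variable {𝕜 m n : Type*} [Field 𝕜] [Fintype m] [Fintype n] [DecidableEq m] [DecidableEq n]

theorem mul_inv_sub_smul_one {A : Matrix n n 𝕜} {ζ : 𝕜} (h : IsUnit (A - ζ • 1)) :
    A * (A - ζ • 1)⁻¹ = 1 + ζ • (A - ζ • 1)⁻¹ := by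
  have hinv := mul_nonsing_inv _ ((isUnit_iff_isUnit_det _).mp h)
  calc A * (A - ζ • 1)⁻¹ = (A - ζ • 1) * (A - ζ • 1)⁻¹ + ζ • (A - ζ • 1)⁻¹ := by
        rw [Matrix.sub_mul, Matrix.smul_mul, Matrix.one_mul, sub_add_cancel]
    _ = 1 + ζ • (A - ζ • 1)⁻¹ := by rw [hinv]

theorem mul_sub_smul_one_mul_pushThrough_eq_one (A : Matrix m n 𝕜) (B : Matrix n m 𝕜) {ζ : 𝕜}
    (hζ : ζ ≠ 0) (h : IsUnit (A * B - ζ • 1)) :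
    (B * A - ζ • 1) * (ζ⁻¹ • (B * (A * B - ζ • 1)⁻¹ * A - 1)) = 1 := by
  have hAB := mul_inv_sub_smul_one h
  set R := (A * B - ζ • 1)⁻¹
  have : (B * A - ζ • 1) * (B * R * A - 1) = ζ • 1 := calc
    (B * A - ζ • 1) * (B * R * A - 1)
      = B * (A * B * R) * A - ζ • (B * R * A) - B * A + ζ • 1 := by
        simp only [Matrix.sub_mul, Matrix.mul_sub, Matrix.smul_mul, Matrix.mul_one,
          Matrix.one_mul, Matrix.mul_assoc]
        abel
    _ = ζ • 1 := by
        rw [hAB, Matrix.mul_add, Matrix.add_mul, Matrix.mul_one, Matrix.mul_smul,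
          Matrix.smul_mul]
        abel
  rw [Matrix.mul_smul, this, smul_smul, inv_mul_cancel₀ hζ, one_smul]

theorem isUnit_mul_sub_smul_one_comm (A : Matrix m n 𝕜) (B : Matrix n m 𝕜) {ζ : 𝕜} (hζ : ζ ≠ 0)
    (h : IsUnit (A * B - ζ • 1)) : IsUnit (B * A - ζ • 1) :=
  .of_mul_eq_one _ (mul_sub_smul_one_mul_pushThrough_eq_one A B hζ h)

theorem inv_mul_sub_smul_one_comm (A : Matrix m n 𝕜) (B : Matrix n m 𝕜) {ζ : 𝕜} (hζ : ζ ≠ 0)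
    (h : IsUnit (A * B - ζ • 1)) :
    (B * A - ζ • 1)⁻¹ = ζ⁻¹ • (B * (A * B - ζ • 1)⁻¹ * A - 1) :=
  inv_eq_right_inv (mul_sub_smul_one_mul_pushThrough_eq_one A B hζ h)

theorem trace_inv_mul_sub_smul_one_comm (A : Matrix m n 𝕜) (B : Matrix n m 𝕜) {ζ : 𝕜}
    (hζ : ζ ≠ 0) (h : IsUnit (A * B - ζ • 1)) :
    trace ((B * A - ζ • 1)⁻¹) =
      trace ((A * B - ζ • 1)⁻¹) + ζ⁻¹ * (Fintype.card m - Fintype.card n) := by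
  rw [inv_mul_sub_smul_one_comm A B hζ h, trace_smul, trace_sub, trace_mul_cycle B,
    mul_inv_sub_smul_one h, trace_add, trace_smul, trace_one, trace_one,
    smul_eq_mul, smul_eq_mul]
  field_simp
  ring

theorem inv_sub_smul_one_mul_eq_one {A : Matrix n n 𝕜} (hA : IsUnit A) {z : 𝕜} (hz : z ≠ 0)
    (h : IsUnit (A - z⁻¹ • 1)) :
    (A⁻¹ - z • 1) * (-z⁻¹ • (A * (A - z⁻¹ • 1)⁻¹)) = 1 := by
  have hAR := mul_inv_sub_smul_one h
  set R := (A - z⁻¹ • 1)⁻¹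
  have : (A⁻¹ - z • 1) * (A * R) = -z • 1 := calc
    (A⁻¹ - z • 1) * (A * R) = A⁻¹ * A * R - z • (A * R) := by
        rw [Matrix.sub_mul, Matrix.smul_mul, Matrix.one_mul, Matrix.mul_assoc]
    _ = -z • 1 := by
        rw [nonsing_inv_mul _ ((isUnit_iff_isUnit_det A).mp hA), Matrix.one_mul, hAR, smul_add,
          smul_smul, mul_inv_cancel₀ hz, one_smul, neg_smul]
        abel
  rw [Matrix.mul_smul, this, smul_smul, neg_mul_neg, inv_mul_cancel₀ hz, one_smul]

theorem isUnit_inv_sub_smul_one {A : Matrix n n 𝕜} (hA : IsUnit A) {z : 𝕜} (hz : z ≠ 0)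
    (h : IsUnit (A - z⁻¹ • 1)) : IsUnit (A⁻¹ - z • 1) :=
  .of_mul_eq_one _ (inv_sub_smul_one_mul_eq_one hA hz h)

theorem trace_inv_inv_sub_smul_one {A : Matrix n n 𝕜} (hA : IsUnit A) {z : 𝕜} (hz : z ≠ 0)
    (h : IsUnit (A - z⁻¹ • 1)) :
    trace ((A⁻¹ - z • 1)⁻¹) = -z⁻¹ * (Fintype.card n + z⁻¹ * trace ((A - z⁻¹ • 1)⁻¹)) := by
  rw [inv_eq_right_inv (inv_sub_smul_one_mul_eq_one hA hz h), trace_smul, mul_inv_sub_smul_one h,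
    trace_add, trace_smul, trace_one, smul_eq_mul, smul_eq_mul]

end Resolvent

end Matrix

/-- Equation (14) of the paper: with `M̂ = (Y Yᴴ)⁻¹` and `c_K = N/K`, for every non-real `z`
the matrices `Yᴴ Y − (1/z) I_K` and `M̂ − z I_N` are invertible and
`b_{\underline{R̂}}(1/z) = −z (1 + c_K z b_M̂(z))`. -/
theorem dual_stieltjes_at_inv_relation
    (N K : ℕ) (hN : 0 < N) (hK : 0 < K)
    (Y : Matrix (Fin N) (Fin K) ℂ) (hY : IsUnit (Y * Yᴴ))
    (M : Matrix (Fin N) (Fin N) ℂ) (hM : M = (Y * Yᴴ)⁻¹)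
    (z : ℂ) (hz : z.im ≠ 0) :
    IsUnit (Yᴴ * Y - (1 / z) • (1 : Matrix (Fin K) (Fin K) ℂ)) ∧
    IsUnit (M - z • (1 : Matrix (Fin N) (Fin N) ℂ)) ∧
    (1 / (K : ℂ)) * Matrix.trace ((Yᴴ * Y - (1 / z) • (1 : Matrix (Fin K) (Fin K) ℂ))⁻¹) =
      -z * (1 + ((N : ℂ) / (K : ℂ)) * z *
        ((1 / (N : ℂ)) * Matrix.trace ((M - z • (1 : Matrix (Fin N) (Fin N) ℂ))⁻¹))) := by
  subst hM
  have hz₀ : z ≠ 0 := by rintro rfl; exact hz Complex.zero_im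
  have hz_inv : (z⁻¹).im ≠ 0 := by
    rw [Complex.inv_im]
    exact div_ne_zero (neg_ne_zero.mpr hz) (Complex.normSq_pos.mpr hz₀).ne'
  have hYY : IsUnit (Y * Yᴴ - z⁻¹ • 1) :=
    (isHermitian_mul_conjTranspose_self Y).isUnit_sub_smul_one hz_inv
  rw [one_div z]
  refine ⟨isUnit_mul_sub_smul_one_comm Y Yᴴ (inv_ne_zero hz₀) hYY,
    isUnit_inv_sub_smul_one hY hz₀ hYY, ?_⟩
  rw [trace_inv_mul_sub_smul_one_comm Y Yᴴ (inv_ne_zero hz₀) hYY,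
    trace_inv_inv_sub_smul_one hY hz₀ hYY, Fintype.card_fin, Fintype.card_fin]
  have hN₀ : (N : ℂ) ≠ 0 := by exact_mod_cast hN.ne'
  have hK₀ : (K : ℂ) ≠ 0 := by exact_mod_cast hK.ne'
  field_simp
  ring
end

section
/- Let N, K be positive integers, c_K = N/K, let ρ̂_1, …, ρ̂_N be pairwise distinct positive real numbers, fix k ∈ {1,…,N}, and define ĝ_k(z) = −z (1 − c_K + (c_K/N) Σ_{r=1}^N (ρ̂_r/(ρ̂_r − z))²) / (ρ̂_k − z). Then for every radius δ with 0 < δ < min_{i ≠ k} |ρ̂_i − ρ̂_k|, the positively oriented circle integral satisfies (1/(2πi)) ∮_{|z − ρ̂_k| = δ} ĝ_k(z) dz = ρ̂_k (1 − c_K + (c_K/N) Σ_{r ≠ k} (ρ̂_r/(ρ̂_r − ρ̂_k))²). -/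
/-!
Splitting off the term `r = k` of the sum writes `ĝ_k(z)` as
`z F(z) / (z - ρ̂_k) + (c_K / N) ρ̂_k² z / (z - ρ̂_k)³`, where `F` is holomorphic on the closed
disc because the other poles `ρ̂_r` lie outside it. Since `z / (z - c)³ = (z - c)⁻² + c (z - c)⁻³`
has no `(z - c)⁻¹` term, the second summand integrates to zero, and Cauchy's integral formula
gives `2πi ρ̂_k F(ρ̂_k)` for the first.
-/

open scoped Real
open Complex Metric

theorem circleIntegrable_sub_center_zpow (c : ℂ) (R : ℝ) (m : ℤ) :
    CircleIntegrable (fun z => (z - c) ^ m) c R := by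
  rcases eq_or_ne R 0 with rfl | hR
  · exact circleIntegrable_sub_zpow_iff.2 (Or.inl rfl)
  · refine circleIntegrable_sub_zpow_iff.2 (Or.inr (Or.inr ?_))
    simpa [eq_comm] using hR

theorem circleIntegral_div_sub_center_pow_eq_zero (c : ℂ) (R : ℝ) {n : ℕ} (hn : 3 ≤ n) :
    (∮ z in C(c, R), z / (z - c) ^ n) = 0 := by
  have hsplit : ∀ z : ℂ, z / (z - c) ^ n = (z - c) ^ (1 - n : ℤ) + c * (z - c) ^ (-n : ℤ) := by
    intro z
    rw [sub_eq_add_neg (1 : ℤ), zpow_add' (Or.inr (Or.inl (by omega))), zpow_one, ← add_mul,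
      sub_add_cancel, zpow_neg, zpow_natCast, div_eq_mul_inv]
  have hint : CircleIntegrable (fun z => c * (z - c) ^ (-n : ℤ)) c R :=
    (circleIntegrable_sub_center_zpow c R _).const_smul
  simp_rw [hsplit]
  rw [circleIntegral.integral_add (circleIntegrable_sub_center_zpow c R _) hint,
    circleIntegral.integral_const_mul, circleIntegral.integral_sub_zpow_of_ne (by omega),
    circleIntegral.integral_sub_zpow_of_ne (by omega), mul_zero, add_zero]

theorem circleIntegral_neg_mul_add_sq_div_sub {f : ℂ → ℂ} {c : ℂ} {R : ℝ} (hR : 0 < R)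
    (hf : DifferentiableOn ℂ f (closedBall c R)) (a : ℂ) :
    (∮ z in C(c, R), -z * (f z + a * (c / (c - z)) ^ 2) / (c - z)) =
      2 * π * I * (c * f c) := by
  have hsplit : ∀ z, -z * (f z + a * (c / (c - z)) ^ 2) / (c - z) =
      (z - c)⁻¹ • (z * f z) + a * c ^ 2 * (z / (z - c) ^ 3) := by
    intro z
    rcases eq_or_ne z c with rfl | hz
    · simp
    · have : z - c ≠ 0 := sub_ne_zero.2 hz
      have : c - z ≠ 0 := sub_ne_zero.2 hz.symm
      rw [smul_eq_mul]
      field_simp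
      ring
  have hdiff : DifferentiableOn ℂ (fun z => z * f z) (closedBall c R) :=
    differentiableOn_id.mul hf
  have hregular : CircleIntegrable (fun z => (z - c)⁻¹ • (z * f z)) c R := by
    refine ContinuousOn.circleIntegrable hR.le
      (((continuousOn_id.sub continuousOn_const).inv₀ fun z hz => ?_).smul
        (hdiff.continuousOn.mono sphere_subset_closedBall))
    exact sub_ne_zero.2 (ne_of_mem_sphere hz hR.ne')
  have hpole : CircleIntegrable (fun z => a * c ^ 2 * (z / (z - c) ^ 3)) c R := by
    refine ContinuousOn.circleIntegrable hR.le
      (continuousOn_const.mul (continuousOn_id.div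
        ((continuousOn_id.sub continuousOn_const).pow 3) fun z hz => ?_))
    exact pow_ne_zero 3 (sub_ne_zero.2 (ne_of_mem_sphere hz hR.ne'))
  simp_rw [hsplit]
  rw [circleIntegral.integral_add hregular hpole, circleIntegral.integral_const_mul,
    circleIntegral_div_sub_center_pow_eq_zero c R le_rfl, mul_zero, add_zero,
    hdiff.circleIntegral_sub_inv_smul (mem_ball_self hR), smul_eq_mul]

theorem residue_third_order_pole_general
    (N K : ℕ)
    (ρ : Fin N → ℝ)
    (k : Fin N)
    (δ : ℝ) (hδ0 : 0 < δ) (hδ : ∀ i, i ≠ k → δ < |ρ i - ρ k|) :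
    (1 / (2 * (π : ℂ) * Complex.I)) *
        (∮ z in C((ρ k : ℂ), δ),
          -z * (1 - (N : ℂ) / (K : ℂ) +
              ((N : ℂ) / (K : ℂ)) / (N : ℂ) * ∑ r, ((ρ r : ℂ) / ((ρ r : ℂ) - z)) ^ 2) /
            ((ρ k : ℂ) - z)) =
      (ρ k : ℂ) * (1 - (N : ℂ) / (K : ℂ) +
        ((N : ℂ) / (K : ℂ)) / (N : ℂ) *
          ∑ r ∈ Finset.univ.erase k, ((ρ r : ℂ) / ((ρ r : ℂ) - (ρ k : ℂ))) ^ 2) := by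
  set a : ℂ := (N : ℂ) / (K : ℂ) / (N : ℂ)
  have hsplit : ∀ z : ℂ, ∑ r, ((ρ r : ℂ) / ((ρ r : ℂ) - z)) ^ 2 =
      ∑ r ∈ Finset.univ.erase k, ((ρ r : ℂ) / ((ρ r : ℂ) - z)) ^ 2 +
        ((ρ k : ℂ) / ((ρ k : ℂ) - z)) ^ 2 :=
    fun z => (Finset.sum_erase_add _ _ (Finset.mem_univ k)).symm
  have hpoles : ∀ r ∈ Finset.univ.erase k, (ρ r : ℂ) ∉ closedBall (ρ k : ℂ) δ := by
    intro r hr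
    rw [mem_closedBall, dist_eq, ← ofReal_sub, norm_real, Real.norm_eq_abs, not_le]
    exact hδ r (Finset.ne_of_mem_erase hr)
  have hregular : DifferentiableOn ℂ (fun z => 1 - (N : ℂ) / (K : ℂ) +
      a * ∑ r ∈ Finset.univ.erase k, ((ρ r : ℂ) / ((ρ r : ℂ) - z)) ^ 2)
      (closedBall (ρ k : ℂ) δ) := by
    refine (differentiableOn_const _).add ((differentiableOn_const _).mul
      (DifferentiableOn.fun_sum fun r hr => ((differentiableOn_const _).div
        ((differentiableOn_const _).sub differentiableOn_id) fun z hz => ?_).pow 2))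
    exact sub_ne_zero.2 fun h => hpoles r hr (h ▸ hz)
  simp_rw [hsplit, mul_add a, ← add_assoc]
  rw [circleIntegral_neg_mul_add_sq_div_sub hδ0 hregular, one_div,
    inv_mul_cancel_left₀ two_pi_I_ne_zero]

/-- Residue computation (48) in the proof of Theorem 4 of the paper: the function
`ĝ_k(z) = −z (1 − c_K + (c_K/N) Σ_r (ρ̂_r/(ρ̂_r − z))²) / (ρ̂_k − z)` has a third-order pole at
`ρ̂_k`, and its circle integral around `ρ̂_k` is given by the stated residue. -/
theorem residue_third_order_pole
    (N K : ℕ) (hN : 0 < N) (hK : 0 < K)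
    (ρ : Fin N → ℝ) (hρ : ∀ i, 0 < ρ i) (hinj : Function.Injective ρ)
    (k : Fin N)
    (δ : ℝ) (hδ0 : 0 < δ) (hδ : ∀ i, i ≠ k → δ < |ρ i - ρ k|) :
    (1 / (2 * (π : ℂ) * Complex.I)) *
        (∮ z in C((ρ k : ℂ), δ),
          -z * (1 - (N : ℂ) / (K : ℂ) +
              ((N : ℂ) / (K : ℂ)) / (N : ℂ) * ∑ r, ((ρ r : ℂ) / ((ρ r : ℂ) - z)) ^ 2) /
            ((ρ k : ℂ) - z)) =
      (ρ k : ℂ) * (1 - (N : ℂ) / (K : ℂ) +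
        ((N : ℂ) / (K : ℂ)) / (N : ℂ) *
          ∑ r ∈ Finset.univ.erase k, ((ρ r : ℂ) / ((ρ r : ℂ) - (ρ k : ℂ))) ^ 2) :=
  residue_third_order_pole_general N K ρ k δ hδ0 hδ
end

section
/- Assume additionally that 𝒩_m and 𝒩_n are disjoint and that the closed disks bounded by C_m and C_n are disjoint. Then (1/(2πi))² ∮_{C_m} ( ∮_{C_n} ( −B(z₁) B(z₂) / (z₁ − z₂)² ) dz₂ ) dz₁ = −(1/K²) Σ_{k ∈ 𝒩_m} Σ_{l ∈ 𝒩_n} ρ̂_k² ρ̂_l² / (ρ̂_k − ρ̂_l)². -/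
/-!
Away from the `ρ̂ᵢ`, `B` is an affine function plus simple poles with residues `ρ̂ᵢ² / K`.
Hence for `h` holomorphic on a closed disk whose boundary avoids the poles, `∮ B h` is `2πi`
times the sum of `(ρ̂ᵢ² / K) h(ρ̂ᵢ)` over the enclosed poles (Cauchy's formula for each of them,
Cauchy–Goursat for the rest). As the closed disks are disjoint, this applies first to the inner
integral, with `h(z₂) = -B(z₁) / (z₁ - z₂)²` for `z₁` on `C_m`, and then to the outer one, with
`h(z₁) = -2πi ∑_{l ∈ 𝒩_n} (ρ̂ₗ² / K) / (z₁ - ρ̂ₗ)²`.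
-/

open scoped Real

open Metric Complex Set

lemma ofReal_mem_ball_iff (x c R : ℝ) : (x : ℂ) ∈ ball (c : ℂ) R ↔ |x - c| < R := by
  rw [mem_ball, Complex.dist_eq, ← Complex.ofReal_sub, Complex.norm_real, Real.norm_eq_abs]

lemma ofReal_mem_sphere_iff (x c R : ℝ) : (x : ℂ) ∈ sphere (c : ℂ) R ↔ |x - c| = R := by
  rw [mem_sphere, Complex.dist_eq, ← Complex.ofReal_sub, Complex.norm_real, Real.norm_eq_abs]

lemma neg_inv_mul_sum_mul_div_sub_eq {ι : Type*} (s : Finset ι) (K : ℂ) (r : ι → ℂ) {z : ℂ}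
    (hz : ∀ i ∈ s, z ≠ r i) :
    -(1 / K) * ∑ i ∈ s, r i * z / (r i - z) =
      (∑ i ∈ s, r i) / K + ∑ i ∈ s, r i ^ 2 / K / (z - r i) := by
  rw [Finset.mul_sum, Finset.sum_div, ← Finset.sum_add_distrib]
  refine Finset.sum_congr rfl fun i hi => ?_
  have h₁ : r i - z ≠ 0 := sub_ne_zero.2 (hz i hi).symm
  have h₂ : z - r i ≠ 0 := sub_ne_zero.2 (hz i hi)
  field_simp
  ring

lemma differentiableOn_div_sub_pow (b : ℂ) (n : ℕ) {w : ℂ} {s : Set ℂ} (hw : w ∉ s) :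
    DifferentiableOn ℂ (fun z => b / (z - w) ^ n) s :=
  (differentiableOn_const b).div ((differentiableOn_id.sub_const w).pow n) fun _ hz =>
    pow_ne_zero n (sub_ne_zero.2 (ne_of_mem_of_not_mem hz hw))

section PartialFraction

variable {ι : Type*} {c : ℂ} {R : ℝ} {p : ι → ℂ} {S : Finset ι}

lemma notMem_closedBall_of_notMem (hmem : ∀ i, p i ∈ ball c R ↔ i ∈ S)
    (hoff : ∀ i, p i ∉ sphere c R) {i : ι} (hi : i ∉ S) : p i ∉ closedBall c R := by
  rw [← ball_union_sphere]
  rintro (h | h)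
  · exact hi ((hmem i).1 h)
  · exact hoff i h

theorem circleIntegral_mul_eq_of_eqOn_partialFraction [Fintype ι] (hR : 0 ≤ R)
    (hmem : ∀ i, p i ∈ ball c R ↔ i ∈ S) (hoff : ∀ i, p i ∉ sphere c R)
    {F P h : ℂ → ℂ} (a : ι → ℂ) (hP : DifferentiableOn ℂ P (closedBall c R))
    (hF : EqOn F (fun z => P z + ∑ i, a i / (z - p i)) (sphere c R))
    (hh : DifferentiableOn ℂ h (closedBall c R)) :
    ∮ z in C(c, R), F z * h z = 2 * π * I * ∑ i ∈ S, a i * h (p i) := by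
  classical
  set g : ℂ → ℂ := fun z => (P z + ∑ i ∈ Sᶜ, a i / (z - p i)) * h z
  set f : ι → ℂ → ℂ := fun i z => (z - p i)⁻¹ • (a i * h z)
  have hg : DifferentiableOn ℂ g (closedBall c R) := by
    refine (hP.add (DifferentiableOn.fun_sum fun i hi => ?_)).mul hh
    simpa only [pow_one] using differentiableOn_div_sub_pow (a i) 1
      (notMem_closedBall_of_notMem hmem hoff (Finset.mem_compl.1 hi))
  have hf : ∀ i, ContinuousOn (f i) (sphere c R) := fun i =>
    ((continuousOn_id.sub continuousOn_const).inv₀ fun _ hz =>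
      sub_ne_zero.2 (ne_of_mem_of_not_mem hz (hoff i))).smul
      (continuousOn_const.mul (hh.continuousOn.mono sphere_subset_closedBall))
  have hsplit : EqOn (fun z => F z * h z) (fun z => g z + ∑ i ∈ S, f i z) (sphere c R) := by
    intro z hz
    have hterm : ∀ i, a i / (z - p i) * h z = f i z := fun i => by simp only [f, smul_eq_mul]; ring
    simp only [hF hz, g, ← Finset.sum_add_sum_compl S, add_mul, Finset.sum_mul, hterm]
    ring
  rw [circleIntegral.integral_congr hR hsplit,
    circleIntegral.integral_add ((hg.continuousOn.mono sphere_subset_closedBall).circleIntegrable hR)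
      ((continuousOn_finsetSum S fun i _ => hf i).circleIntegrable hR),
    circleIntegral.integral_fun_sum fun i _ => (hf i).circleIntegrable hR,
    (hg.mono closure_ball_subset_closedBall).diffContOnCl.circleIntegral_eq_zero hR, zero_add,
    Finset.mul_sum]
  refine Finset.sum_congr rfl fun i hi => ?_
  exact ((differentiableOn_const (a i)).mul hh).circleIntegral_sub_inv_smul ((hmem i).2 hi)

end PartialFraction

lemma eqOn_partialFraction_of_forall_eq {N K : ℕ} {ρ : Fin N → ℝ} {B : ℂ → ℂ}
    (hB : ∀ z, B z = -(1 / (K : ℂ)) * ∑ i, (ρ i : ℂ) * z / ((ρ i : ℂ) - z) -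
        (((K : ℂ) - (N : ℂ)) / (K : ℂ)) * z)
    {x R : ℝ} (hoff : ∀ i, |ρ i - x| ≠ R) :
    EqOn B (fun z => (∑ i, (ρ i : ℂ)) / K - ((K - N) / K) * z +
      ∑ i, (ρ i : ℂ) ^ 2 / K / (z - ρ i)) (sphere (x : ℂ) R) := fun z hz => by
  have hz' : ∀ i ∈ Finset.univ, z ≠ ρ i := fun i _ h =>
    hoff i ((ofReal_mem_sphere_iff _ _ _).1 (h ▸ hz))
  rw [hB, neg_inv_mul_sum_mul_div_sub_eq _ _ _ hz']
  ring

theorem I2_off_diagonal_general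
    (N K : ℕ)
    (ρ : Fin N → ℝ)
    (B : ℂ → ℂ)
    (hB : ∀ z, B z = -(1 / (K : ℂ)) * ∑ i, (ρ i : ℂ) * z / ((ρ i : ℂ) - z) -
        (((K : ℂ) - (N : ℂ)) / (K : ℂ)) * z)
    (𝒩m 𝒩n : Finset (Fin N))
    (xm xn Rm Rn : ℝ) (hRm : 0 < Rm) (hRn : 0 < Rn)
    (hmem_m : ∀ i, |ρ i - xm| < Rm ↔ i ∈ 𝒩m)
    (hmem_n : ∀ i, |ρ i - xn| < Rn ↔ i ∈ 𝒩n)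
    (hoff_m : ∀ i, |ρ i - xm| ≠ Rm)
    (hoff_n : ∀ i, |ρ i - xn| ≠ Rn)
    (hballs : Disjoint (Metric.closedBall (xm : ℂ) Rm) (Metric.closedBall (xn : ℂ) Rn)) :
    (1 / (2 * (π : ℂ) * Complex.I)) ^ 2 *
        (∮ z₁ in C((xm : ℂ), Rm), ∮ z₂ in C((xn : ℂ), Rn),
          -(B z₁ * B z₂) / (z₁ - z₂) ^ 2) =
      -(1 / (K : ℂ) ^ 2) *
        ∑ k ∈ 𝒩m, ∑ l ∈ 𝒩n,
          (ρ k : ℂ) ^ 2 * (ρ l : ℂ) ^ 2 / ((ρ k : ℂ) - (ρ l : ℂ)) ^ 2 := by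
  set a : Fin N → ℂ := fun i => (ρ i : ℂ) ^ 2 / K
  have hP : Differentiable ℂ fun z : ℂ => (∑ i, (ρ i : ℂ)) / K - ((K - N) / K) * z := by
    fun_prop
  have hmem_m' i := (ofReal_mem_ball_iff (ρ i) xm Rm).trans (hmem_m i)
  have hmem_n' i := (ofReal_mem_ball_iff (ρ i) xn Rn).trans (hmem_n i)
  have hoff_m' i := mt (ofReal_mem_sphere_iff (ρ i) xm Rm).1 (hoff_m i)
  have hoff_n' i := mt (ofReal_mem_sphere_iff (ρ i) xn Rn).1 (hoff_n i)
  set H : ℂ → ℂ := fun z => -(2 * π * I) * ∑ l ∈ 𝒩n, a l / (z - ρ l) ^ 2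
  have inner : EqOn (fun z₁ => ∮ z₂ in C((xn : ℂ), Rn), -(B z₁ * B z₂) / (z₁ - z₂) ^ 2)
      (fun z₁ => B z₁ * H z₁) (sphere (xm : ℂ) Rm) := fun z₁ hz₁ => by
    have hz₁ : z₁ ∉ closedBall (xn : ℂ) Rn :=
      disjoint_left.1 hballs (sphere_subset_closedBall hz₁)
    simp only [show ∀ z₂, -(B z₁ * B z₂) / (z₁ - z₂) ^ 2 = B z₂ * (-B z₁ / (z₂ - z₁) ^ 2) by
        intro; ring]
    rw [circleIntegral_mul_eq_of_eqOn_partialFraction hRn.le hmem_n' hoff_n' a hP.differentiableOn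
      (eqOn_partialFraction_of_forall_eq hB hoff_n) (differentiableOn_div_sub_pow _ 2 hz₁)]
    simp only [H, Finset.mul_sum]
    exact Finset.sum_congr rfl fun l _ => by ring
  have hH : DifferentiableOn ℂ H (closedBall (xm : ℂ) Rm) :=
    (DifferentiableOn.fun_sum fun l hl => differentiableOn_div_sub_pow (a l) 2 fun h =>
      disjoint_left.1 hballs h (ball_subset_closedBall ((hmem_n' l).2 hl))).const_mul _
  rw [circleIntegral.integral_congr hRm.le inner,
    circleIntegral_mul_eq_of_eqOn_partialFraction hRm.le hmem_m' hoff_m' a hP.differentiableOn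
      (eqOn_partialFraction_of_forall_eq hB hoff_m) hH]
  have h2πI : 2 * (π : ℂ) * I ≠ 0 := by simp [Real.pi_ne_zero]
  simp only [H, a, Finset.mul_sum]
  refine Finset.sum_congr rfl fun k _ => Finset.sum_congr rfl fun l _ => ?_
  field_simp

/-- Proposition 1 of the paper (case `m ≠ n`, eq. (91)): the evaluation of the double contour
integral `I₂ = (1/(2πi))² ∮∮ −B(z₁)B(z₂)/(z₁−z₂)² dz₂ dz₁` over two circles with disjoint
closed disks, each enclosing exactly the eigenvalues indexed by `𝒩_m` resp. `𝒩_n`. -/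
theorem I2_off_diagonal
    (N K : ℕ) (hN : 0 < N) (hNK : N ≤ K)
    (ρ : Fin N → ℝ) (hρ : ∀ i, 0 < ρ i) (hinj : Function.Injective ρ)
    (B : ℂ → ℂ)
    (hB : ∀ z, B z = -(1 / (K : ℂ)) * ∑ i, (ρ i : ℂ) * z / ((ρ i : ℂ) - z) -
        (((K : ℂ) - (N : ℂ)) / (K : ℂ)) * z)
    (𝒩m 𝒩n : Finset (Fin N)) (hdisj : Disjoint 𝒩m 𝒩n)
    (xm xn Rm Rn : ℝ) (hRm : 0 < Rm) (hRn : 0 < Rn)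
    (hmem_m : ∀ i, |ρ i - xm| < Rm ↔ i ∈ 𝒩m)
    (hmem_n : ∀ i, |ρ i - xn| < Rn ↔ i ∈ 𝒩n)
    (hoff_m : ∀ i, |ρ i - xm| ≠ Rm)
    (hoff_n : ∀ i, |ρ i - xn| ≠ Rn)
    (hballs : Disjoint (Metric.closedBall (xm : ℂ) Rm) (Metric.closedBall (xn : ℂ) Rn)) :
    (1 / (2 * (π : ℂ) * Complex.I)) ^ 2 *
        (∮ z₁ in C((xm : ℂ), Rm), ∮ z₂ in C((xn : ℂ), Rn),
          -(B z₁ * B z₂) / (z₁ - z₂) ^ 2) =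
      -(1 / (K : ℂ) ^ 2) *
        ∑ k ∈ 𝒩m, ∑ l ∈ 𝒩n,
          (ρ k : ℂ) ^ 2 * (ρ l : ℂ) ^ 2 / ((ρ k : ℂ) - (ρ l : ℂ)) ^ 2 :=
  I2_off_diagonal_general N K ρ B hB 𝒩m 𝒩n xm xn Rm Rn hRm hRn hmem_m hmem_n hoff_m hoff_n hballs
end

section
/- Let x₀ be a real number and 0 < r < r' be radii such that |ρ̂_k − x₀| < r for every k ∈ 𝒩_m and |ρ̂_i − x₀| > r' for every i ∉ 𝒩_m. Let C be the positively oriented circle of center x₀ and radius r, and C' the positively oriented circle of center x₀ and radius r'. Then (1/(2πi))² ∮_{C'} ( ∮_{C} ( −B(z₁) B(z₂) / (z₁ − z₂)² ) dz₁ ) dz₂ = (1/K²) [ Σ_{k ∈ 𝒩_m} Σ_{l ∉ 𝒩_m} ρ̂_k² ρ̂_l² / (ρ̂_k − ρ̂_l)² + (K − N) Σ_{k ∈ 𝒩_m} ρ̂_k² ]. -/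
/-!
On both circles `B` agrees with the rational function `α + β z + ∑ᵢ γᵢ (z - ρᵢ)⁻¹`, where
`β = (N - K) / K` and `γᵢ = ρᵢ² / K`. Against the kernel `(z - w)⁻²`, partial fractions reduce
everything to `∮ (z - a)⁻¹ = 2πi·[a inside]` and `∮ (z - w)⁻² = 0`, so a pole `a` of `B`
contributes `2πi γ ([a inside] - [w inside]) / (a - w)²` and the linear part `2πi β [w inside]`.
For `z₂` on the outer circle only the poles `ρ_k`, `k ∈ 𝒩_m`, are inside the inner circle, which
gives `2πi/K ∑ ρ_k² / (ρ_k - z₂)²`. With `w = ρ_k` inside the outer circle, the enclosed poles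
then drop out, leaving `β` and the poles `ρ_l`, `l ∉ 𝒩_m`, outside it.
-/

open scoped Real

open Metric Complex Set

section

variable {c a w : ℂ} {R : ℝ}

theorem continuousOn_sub_inv {s : Set ℂ} (ha : a ∉ s) : ContinuousOn (fun z => (z - a)⁻¹) s :=
  (continuousOn_id.sub continuousOn_const).inv₀ fun _ hz =>
    sub_ne_zero.2 (ne_of_mem_of_not_mem hz ha)

namespace circleIntegral

theorem integral_finsetSum {E ι : Type*} [NormedAddCommGroup E] [NormedSpace ℂ E] (s : Finset ι)
    {f : ι → ℂ → E} (hf : ∀ i ∈ s, CircleIntegrable (f i) c R) :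
    (∮ z in C(c, R), ∑ i ∈ s, f i z) = ∑ i ∈ s, ∮ z in C(c, R), f i z := by
  simp only [circleIntegral, Finset.smul_sum]
  exact intervalIntegral.integral_finsetSum fun i hi => (hf i hi).out

theorem integral_sub_inv_of_notMem_sphere (hR : 0 ≤ R) (ha : a ∉ sphere c R) :
    (∮ z in C(c, R), (z - a)⁻¹) = 2 * π * I * (ball c R).indicator 1 a := by
  by_cases hab : a ∈ ball c R
  · rw [Set.indicator_of_mem hab, Pi.one_apply, mul_one,
      integral_sub_inv_of_mem_ball hab]
  have hac : a ∉ closedBall c R := by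
    rw [← ball_union_sphere, Set.mem_union, not_or]
    exact ⟨hab, ha⟩
  rw [Set.indicator_of_notMem hab, mul_zero]
  exact circleIntegral_eq_zero_of_differentiable_on_off_countable hR Set.countable_empty
    (continuousOn_sub_inv hac) fun z hz => (differentiableAt_id.sub_const a).inv
      (sub_ne_zero.2 (ne_of_mem_of_not_mem (ball_subset_closedBall hz.1) hac))

theorem integral_sub_inv_sq (c a : ℂ) (R : ℝ) : (∮ z in C(c, R), (z - a)⁻¹ ^ 2) = 0 := by
  simpa [zpow_neg, inv_pow] using integral_sub_zpow_of_ne (n := -2) (by decide) c a R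

theorem integral_mul_sub_inv_sq (hR : 0 ≤ R) (hw : w ∉ sphere c R) :
    (∮ z in C(c, R), z * (z - w)⁻¹ ^ 2) = 2 * π * I * (ball c R).indicator 1 w := by
  have hsplit : EqOn (fun z => z * (z - w)⁻¹ ^ 2) (fun z => (z - w)⁻¹ + w * (z - w)⁻¹ ^ 2)
      (sphere c R) := fun z hz => by
    have : z - w ≠ 0 := sub_ne_zero.2 (ne_of_mem_of_not_mem hz hw)
    field_simp
    ring
  have hw' := continuousOn_sub_inv hw
  rw [integral_congr hR hsplit, integral_add
      (hw'.circleIntegrable hR) (ContinuousOn.circleIntegrable hR (by fun_prop)),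
    integral_const_mul, integral_sub_inv_sq,
    integral_sub_inv_of_notMem_sphere hR hw, mul_zero, add_zero]

-- The case `a = w` is included: the integrand is then `(z - w)⁻¹ ^ 3` and the numerator vanishes.
theorem integral_sub_inv_mul_sub_inv_sq (hR : 0 ≤ R) (ha : a ∉ sphere c R)
    (hw : w ∉ sphere c R) :
    (∮ z in C(c, R), (z - a)⁻¹ * (z - w)⁻¹ ^ 2) =
      2 * π * I * ((ball c R).indicator 1 a - (ball c R).indicator 1 w) / (a - w) ^ 2 := by
  rcases eq_or_ne a w with rfl | haw
  · rw [sub_self, sub_self, zero_pow two_ne_zero, div_zero]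
    simpa [zpow_neg, ← inv_pow, ← pow_succ'] using
      integral_sub_zpow_of_ne (n := -3) (by decide) c a R
  have hsplit : EqOn (fun z => (z - a)⁻¹ * (z - w)⁻¹ ^ 2)
      (fun z => ((a - w) ^ 2)⁻¹ * ((z - a)⁻¹ - (z - w)⁻¹) - (a - w)⁻¹ * (z - w)⁻¹ ^ 2)
      (sphere c R) := fun z hz => by
    have : z - a ≠ 0 := sub_ne_zero.2 (ne_of_mem_of_not_mem hz ha)
    have : z - w ≠ 0 := sub_ne_zero.2 (ne_of_mem_of_not_mem hz hw)
    have : a - w ≠ 0 := sub_ne_zero.2 haw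
    field_simp
    ring
  have ha' := continuousOn_sub_inv ha
  have hw' := continuousOn_sub_inv hw
  rw [integral_congr hR hsplit,
    integral_sub (ContinuousOn.circleIntegrable hR (by fun_prop))
      (ContinuousOn.circleIntegrable hR (by fun_prop)),
    integral_const_mul, integral_const_mul, integral_sub_inv_sq,
    integral_sub (ha'.circleIntegrable hR) (hw'.circleIntegrable hR),
    integral_sub_inv_of_notMem_sphere hR ha, integral_sub_inv_of_notMem_sphere hR hw]
  ring

end circleIntegral

end

noncomputable def affineAddSimplePoles {ι : Type*} [Fintype ι] (α β : ℂ) (γ a : ι → ℂ)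
    (z : ℂ) : ℂ :=
  α + β * z + ∑ i, γ i * (z - a i)⁻¹

section AffineAddSimplePoles

variable {ι : Type*} [Fintype ι] {α β : ℂ} {γ a : ι → ℂ} {c w : ℂ} {R : ℝ}

theorem affineAddSimplePoles_eq_neg_mul_sum_div_sub (t u : ℂ) {z : ℂ} (hz : ∀ i, z ≠ a i) :
    affineAddSimplePoles (t * ∑ i, a i) (-u) (fun i => t * a i ^ 2) a z =
      -t * ∑ i, a i * z / (a i - z) - u * z := by
  have hterm : ∀ i, a i * z / (a i - z) = -a i - a i ^ 2 * (z - a i)⁻¹ := fun i => by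
    have : z - a i ≠ 0 := sub_ne_zero.2 (hz i)
    have : a i - z ≠ 0 := sub_ne_zero.2 (hz i).symm
    field_simp
    ring
  simp only [affineAddSimplePoles, hterm, Finset.sum_sub_distrib, Finset.sum_neg_distrib,
    mul_assoc, ← Finset.mul_sum]
  ring

theorem continuousOn_affineAddSimplePoles {s : Set ℂ} (ha : ∀ i, a i ∉ s) :
    ContinuousOn (affineAddSimplePoles α β γ a) s := by
  have ha' := fun i => continuousOn_sub_inv (ha i)
  unfold affineAddSimplePoles
  fun_prop

theorem circleIntegral.integral_affineAddSimplePoles_mul_sub_inv_sq (hR : 0 ≤ R)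
    (ha : ∀ i, a i ∉ sphere c R) (hw : w ∉ sphere c R) :
    (∮ z in C(c, R), affineAddSimplePoles α β γ a z * (z - w)⁻¹ ^ 2) =
      2 * π * I * (β * (ball c R).indicator 1 w +
        ∑ i, γ i * ((ball c R).indicator 1 (a i) - (ball c R).indicator 1 w) / (a i - w) ^ 2) := by
  have ha' := fun i => continuousOn_sub_inv (ha i)
  have hw' := continuousOn_sub_inv hw
  have hexpand : (fun z => affineAddSimplePoles α β γ a z * (z - w)⁻¹ ^ 2) = fun z =>
      α * (z - w)⁻¹ ^ 2 + β * (z * (z - w)⁻¹ ^ 2) + ∑ i, γ i * ((z - a i)⁻¹ * (z - w)⁻¹ ^ 2) := by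
    funext z
    simp only [affineAddSimplePoles, add_mul, Finset.sum_mul, mul_assoc]
  rw [hexpand, circleIntegral.integral_add (ContinuousOn.circleIntegrable hR (by fun_prop))
      (ContinuousOn.circleIntegrable hR (by fun_prop)),
    circleIntegral.integral_add (ContinuousOn.circleIntegrable hR (by fun_prop))
      (ContinuousOn.circleIntegrable hR (by fun_prop)),
    circleIntegral.integral_finsetSum _ fun i _ => ContinuousOn.circleIntegrable hR (by fun_prop)]
  simp only [circleIntegral.integral_const_mul, circleIntegral.integral_sub_inv_sq,
    circleIntegral.integral_mul_sub_inv_sq hR hw,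
    circleIntegral.integral_sub_inv_mul_sub_inv_sq hR (ha _) hw,
    mul_zero, zero_add]
  rw [mul_add, Finset.mul_sum]
  congr 1
  · ring
  · exact Finset.sum_congr rfl fun i _ => by ring

end AffineAddSimplePoles

structure CircleSeparates {ι : Type*} (c : ℂ) (R : ℝ) (s : Finset ι) (a : ι → ℂ) : Prop where
  mem_ball : ∀ i ∈ s, a i ∈ ball c R
  notMem_closedBall : ∀ i ∉ s, a i ∉ closedBall c R

namespace CircleSeparates

variable {ι : Type*} {s : Finset ι} {a : ι → ℂ} {c : ℂ} {r r' R : ℝ}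

theorem of_le (hin : ∀ i ∈ s, a i ∈ ball c r) (hout : ∀ i ∉ s, a i ∉ closedBall c r')
    (hrR : r ≤ R) (hRr' : R ≤ r') : CircleSeparates c R s a where
  mem_ball i hi := ball_subset_ball hrR (hin i hi)
  notMem_closedBall i hi h := hout i hi (closedBall_subset_closedBall hRr' h)

theorem notMem_sphere (h : CircleSeparates c R s a) (i : ι) : a i ∉ sphere c R := by
  by_cases hi : i ∈ s
  · exact fun hs => (Metric.mem_ball.1 (h.mem_ball i hi)).ne (mem_sphere.1 hs)
  · exact fun hs => h.notMem_closedBall i hi (sphere_subset_closedBall hs)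

variable [DecidableEq ι]

theorem indicator_ball (h : CircleSeparates c R s a) (i : ι) :
    (ball c R).indicator 1 (a i) = if i ∈ s then (1 : ℂ) else 0 := by
  by_cases hi : i ∈ s
  · rw [if_pos hi, Set.indicator_of_mem (h.mem_ball i hi), Pi.one_apply]
  · rw [if_neg hi, Set.indicator_of_notMem fun hb =>
      h.notMem_closedBall i hi (ball_subset_closedBall hb)]

variable [Fintype ι] {α β w : ℂ} {γ : ι → ℂ}

theorem circleIntegral_mul_sub_inv_sq_of_notMem_closedBall (h : CircleSeparates c R s a)
    (hR : 0 ≤ R) (hw : w ∉ closedBall c R) :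
    (∮ z in C(c, R), affineAddSimplePoles α β γ a z * (z - w)⁻¹ ^ 2) =
      2 * π * I * ∑ i ∈ s, γ i / (a i - w) ^ 2 := by
  rw [circleIntegral.integral_affineAddSimplePoles_mul_sub_inv_sq hR h.notMem_sphere
      fun hs => hw (sphere_subset_closedBall hs),
    Set.indicator_of_notMem fun hb => hw (ball_subset_closedBall hb)]
  simp only [h.indicator_ball, sub_zero, mul_zero, zero_add, mul_ite, mul_one, ite_div,
    zero_div, Finset.sum_ite_mem, Finset.univ_inter]

theorem circleIntegral_mul_sub_inv_sq_of_mem (h : CircleSeparates c R s a) (hR : 0 ≤ R)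
    {k : ι} (hk : k ∈ s) :
    (∮ z in C(c, R), affineAddSimplePoles α β γ a z * (z - a k)⁻¹ ^ 2) =
      2 * π * I * (β - ∑ l ∈ sᶜ, γ l / (a k - a l) ^ 2) := by
  rw [circleIntegral.integral_affineAddSimplePoles_mul_sub_inv_sq hR h.notMem_sphere
      (h.notMem_sphere k),
    Set.indicator_of_mem (h.mem_ball k hk), Pi.one_apply, mul_one, ← Finset.sum_add_sum_compl s,
    Finset.sum_eq_zero fun i hi => by
      rw [h.indicator_ball, if_pos hi, sub_self, mul_zero, zero_div],
    zero_add, sub_eq_add_neg, ← Finset.sum_neg_distrib]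
  congr 2
  refine Finset.sum_congr rfl fun l hl => ?_
  rw [h.indicator_ball, if_neg (Finset.mem_compl.1 hl), sub_sq_comm]
  ring

end CircleSeparates

theorem circleIntegral_circleIntegral_affineAddSimplePoles {ι : Type*} [Fintype ι]
    [DecidableEq ι] {s : Finset ι} {α β : ℂ} {γ a : ι → ℂ} {c : ℂ} {r r' : ℝ} (hr : 0 ≤ r)
    (hrr' : r < r') (hsep : CircleSeparates c r s a) (hsep' : CircleSeparates c r' s a) :
    (∮ z₂ in C(c, r'), ∮ z₁ in C(c, r),
        -(affineAddSimplePoles α β γ a z₁ * affineAddSimplePoles α β γ a z₂) / (z₁ - z₂) ^ 2) =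
      (2 * π * I) ^ 2 * ∑ k ∈ s, γ k * (∑ l ∈ sᶜ, γ l / (a k - a l) ^ 2 - β) := by
  set F := affineAddSimplePoles α β γ a
  have hr' : 0 ≤ r' := hr.trans hrr'.le
  have hinner : EqOn (fun z₂ => ∮ z₁ in C(c, r), -(F z₁ * F z₂) / (z₁ - z₂) ^ 2)
      (fun z₂ => ∑ k ∈ s, -(2 * π * I * γ k) * (F z₂ * (z₂ - a k)⁻¹ ^ 2)) (sphere c r') := by
    intro z₂ hz₂
    have hz₂r : z₂ ∉ closedBall c r := by
      rw [mem_closedBall, mem_sphere.1 hz₂, not_le]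
      exact hrr'
    calc (∮ z₁ in C(c, r), -(F z₁ * F z₂) / (z₁ - z₂) ^ 2)
        = -F z₂ * ∮ z₁ in C(c, r), F z₁ * (z₁ - z₂)⁻¹ ^ 2 := by
          rw [← circleIntegral.integral_const_mul]
          congr 1
          funext z₁
          rw [inv_pow]
          ring
      _ = _ := by
          rw [hsep.circleIntegral_mul_sub_inv_sq_of_notMem_closedBall hr hz₂r, Finset.mul_sum,
            Finset.mul_sum]
          refine Finset.sum_congr rfl fun k _ => ?_
          rw [sub_sq_comm, inv_pow]
          ring
  have hF := continuousOn_affineAddSimplePoles (α := α) (β := β) (γ := γ) hsep'.notMem_sphere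
  have hpoles := fun k => continuousOn_sub_inv (hsep'.notMem_sphere k)
  rw [circleIntegral.integral_congr hr' hinner, circleIntegral.integral_finsetSum _ fun k _ =>
      ContinuousOn.circleIntegrable hr' (by fun_prop), Finset.mul_sum]
  refine Finset.sum_congr rfl fun k hk => ?_
  rw [circleIntegral.integral_const_mul, hsep'.circleIntegral_mul_sub_inv_sq_of_mem hr' hk]
  ring

theorem I2_diagonal_general
    (N K : ℕ) (ρ : Fin N → ℝ)
    (B : ℂ → ℂ)
    (hB : ∀ z, B z = -(1 / (K : ℂ)) * ∑ i, (ρ i : ℂ) * z / ((ρ i : ℂ) - z) -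
        (((K : ℂ) - (N : ℂ)) / (K : ℂ)) * z)
    (𝒩m : Finset (Fin N))
    (x₀ r r' : ℝ) (hr : 0 < r) (hrr' : r < r')
    (hin : ∀ k ∈ 𝒩m, |ρ k - x₀| < r)
    (hout : ∀ i ∉ 𝒩m, r' < |ρ i - x₀|) :
    (1 / (2 * (π : ℂ) * Complex.I)) ^ 2 *
        (∮ z₂ in C((x₀ : ℂ), r'), ∮ z₁ in C((x₀ : ℂ), r),
          -(B z₁ * B z₂) / (z₁ - z₂) ^ 2) =
      (1 / (K : ℂ) ^ 2) *
        ((∑ k ∈ 𝒩m, ∑ l ∈ 𝒩mᶜ,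
            (ρ k : ℂ) ^ 2 * (ρ l : ℂ) ^ 2 / ((ρ k : ℂ) - (ρ l : ℂ)) ^ 2) +
          ((K : ℂ) - (N : ℂ)) * ∑ k ∈ 𝒩m, (ρ k : ℂ) ^ 2) := by
  set F := affineAddSimplePoles ((1 / K) * ∑ i, (ρ i : ℂ)) (-((K - N) / K))
    (fun i => (1 / K) * (ρ i : ℂ) ^ 2) (fun i => (ρ i : ℂ))
  have hdist : ∀ i, dist (ρ i : ℂ) x₀ = |ρ i - x₀| := fun i => by
    rw [Complex.dist_eq, ← Complex.ofReal_sub, Complex.norm_real, Real.norm_eq_abs]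
  have hsep : ∀ R, r ≤ R → R ≤ r' → CircleSeparates (x₀ : ℂ) R 𝒩m (fun i => (ρ i : ℂ)) :=
    fun _ => CircleSeparates.of_le (fun k hk => by rw [mem_ball, hdist]; exact hin k hk)
      (fun i hi => by rw [mem_closedBall, hdist, not_le]; exact hout i hi)
  have hBF : ∀ R, r ≤ R → R ≤ r' → EqOn B F (sphere (x₀ : ℂ) R) := fun R hrR hRr' z hz => by
    rw [hB]
    exact (affineAddSimplePoles_eq_neg_mul_sum_div_sub _ _
      fun i h => (hsep R hrR hRr').notMem_sphere i (by simpa [h] using hz)).symm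
  have hBF_double : (∮ z₂ in C((x₀ : ℂ), r'), ∮ z₁ in C((x₀ : ℂ), r),
      -(B z₁ * B z₂) / (z₁ - z₂) ^ 2) =
        ∮ z₂ in C((x₀ : ℂ), r'), ∮ z₁ in C((x₀ : ℂ), r), -(F z₁ * F z₂) / (z₁ - z₂) ^ 2 :=
    circleIntegral.integral_congr (hr.trans hrr').le fun z₂ hz₂ =>
      circleIntegral.integral_congr hr.le fun z₁ hz₁ => by
        simp only [hBF r le_rfl hrr'.le hz₁, hBF r' hrr'.le le_rfl hz₂]
  have h2πI : (2 * π * I : ℂ) ≠ 0 := by simp [Real.pi_ne_zero, I_ne_zero]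
  rw [hBF_double, circleIntegral_circleIntegral_affineAddSimplePoles hr.le hrr'
      (hsep r le_rfl hrr'.le) (hsep r' hrr'.le le_rfl), ← mul_assoc, ← mul_pow,
    one_div_mul_cancel h2πI, one_pow, one_mul, mul_add, Finset.mul_sum, Finset.mul_sum,
    Finset.mul_sum, ← Finset.sum_add_distrib]
  refine Finset.sum_congr rfl fun k _ => ?_
  rw [mul_sub, Finset.mul_sum, Finset.mul_sum, sub_eq_add_neg]
  congr 1
  · exact Finset.sum_congr rfl fun l _ => by ring
  · ring

/-- Proposition 1 of the paper (case `m = n`, eq. (97)): the evaluation of the double contour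
integral `I₂` over two concentric circles `C = C(x₀, r)` and `C' = C(x₀, r')` with `r < r'`,
where the inner circle encloses exactly the eigenvalues indexed by `𝒩_m` and all other
eigenvalues lie outside the outer circle. -/
theorem I2_diagonal
    (N K : ℕ) (hN : 0 < N) (hNK : N ≤ K)
    (ρ : Fin N → ℝ) (hρ : ∀ i, 0 < ρ i) (hinj : Function.Injective ρ)
    (B : ℂ → ℂ)
    (hB : ∀ z, B z = -(1 / (K : ℂ)) * ∑ i, (ρ i : ℂ) * z / ((ρ i : ℂ) - z) -
        (((K : ℂ) - (N : ℂ)) / (K : ℂ)) * z)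
    (𝒩m : Finset (Fin N)) (h𝒩m : 𝒩m.Nonempty)
    (x₀ r r' : ℝ) (hr : 0 < r) (hrr' : r < r')
    (hin : ∀ k ∈ 𝒩m, |ρ k - x₀| < r)
    (hout : ∀ i ∉ 𝒩m, r' < |ρ i - x₀|) :
    (1 / (2 * (π : ℂ) * Complex.I)) ^ 2 *
        (∮ z₂ in C((x₀ : ℂ), r'), ∮ z₁ in C((x₀ : ℂ), r),
          -(B z₁ * B z₂) / (z₁ - z₂) ^ 2) =
      (1 / (K : ℂ) ^ 2) *
        ((∑ k ∈ 𝒩m, ∑ l ∈ 𝒩mᶜ,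
            (ρ k : ℂ) ^ 2 * (ρ l : ℂ) ^ 2 / ((ρ k : ℂ) - (ρ l : ℂ)) ^ 2) +
          ((K : ℂ) - (N : ℂ)) * ∑ k ∈ 𝒩m, (ρ k : ℂ) ^ 2) :=
  I2_diagonal_general N K ρ B hB 𝒩m x₀ r r' hr hrr' hin hout
end
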